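/- Under the stated stochastic linear bandit setup with the LinIMED-2 arm-selection rule, there exist a constant c > 0 and T₀ ≥ 2 depending only on L, S, R and λ such that for every T ≥ T₀ and every free parameter Γ ∈ (0,1): F_2 ≤ T·Γ + c·(d·β_T·log T/Γ)·log(1 + L²·β_T·log T/(λ·Γ²)), where β_T := (R·√(d·log(T²·(1 + T·L²/λ))) + √λ·S)². -/

import Mathlib

open Matrix Finset
open scoped Classical

noncomputable section

/-- Euclidean norm of a vector in `ℝ^d`. -/
def enorm2 {d : ℕ} (v : Fin d → ℝ) : ℝ := Real.sqrt (v ⬝ᵥ v)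

/-- Mahalanobis norm `‖x‖_A = √(xᵀ A x)`. -/
def mnorm {d : ℕ} (A : Matrix (Fin d) (Fin d) ℝ) (v : Fin d → ℝ) : ℝ :=
  Real.sqrt (v ⬝ᵥ A.mulVec v)

/-- Confidence width `β_n(γ) = (R·√(d·log((1 + n·L²/λ)/γ)) + √λ·S)²`. -/
def betaConf (d : ℕ) (L S R lam : ℝ) (n : ℕ) (γ : ℝ) : ℝ :=
  (R * Real.sqrt (d * Real.log ((1 + (n : ℝ) * L ^ 2 / lam) / γ)) + Real.sqrt lam * S) ^ 2

/-- Stochastic linear bandit environment together with a trajectory generated by the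
LinIMED-2 algorithm. -/
structure LinIMED2 (d T : ℕ) (L S R lam : ℝ) : Type 1 where
  hd : 1 ≤ d
  hT : 2 ≤ T
  hL : 0 < L
  hS : 0 < S
  hR : 0 < R
  hlam : 0 < lam
  hlamS : 1 ≤ Real.sqrt lam * S
  /-- the type of arms -/
  Arm : Type
  [mArm : MeasurableSpace Arm]
  /-- the arm set available at each round -/
  arms : ℕ → Finset Arm
  arms_ne : ∀ t, (arms t).Nonempty
  /-- the context of each arm at each round -/
  ctx : ℕ → Arm → Fin d → ℝ
  ctx_bdd : ∀ t, 1 ≤ t → t ≤ T → ∀ a ∈ arms t, enorm2 (ctx t a) ≤ L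
  /-- the unknown parameter θ* -/
  θstar : Fin d → ℝ
  θstar_bdd : enorm2 θstar ≤ S
  /-- Assumption 1: all suboptimality gaps are at most 1 -/
  gap_bdd : ∀ t, 1 ≤ t → t ≤ T → ∀ b ∈ arms t,
    (arms t).sup' (arms_ne t) (fun a => θstar ⬝ᵥ ctx t a) - θstar ⬝ᵥ ctx t b ≤ 1
  /-- the sample space -/
  Ω : Type
  [mΩ : MeasurableSpace Ω]
  /-- the underlying probability measure -/
  P : MeasureTheory.Measure Ω
  [hP : MeasureTheory.IsProbabilityMeasure P]
  /-- the arm chosen at each round -/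
  act : ℕ → Ω → Arm
  act_mem : ∀ t, 1 ≤ t → t ≤ T → ∀ ω, act t ω ∈ arms t
  /-- the noise sequence -/
  noise : ℕ → Ω → ℝ
  /-- the observed reward `Y_t = ⟨θ*, X_t⟩ + η_t` -/
  rew : ℕ → Ω → ℝ
  hrew : ∀ t ω, rew t ω = θstar ⬝ᵥ ctx t (act t ω) + noise t ω
  /-- the chosen arm is a measurable function of `(A_1, Y_1, …, A_{t−1}, Y_{t−1})` -/
  act_pred : ∀ t, 1 ≤ t → t ≤ T →
    @Measurable Ω Arm
      (MeasurableSpace.comap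
        (fun ω => (fun s : Fin (t - 1) => act (s + 1) ω,
                   fun s : Fin (t - 1) => rew (s + 1) ω))
        inferInstance) mArm (act t)
  /-- the noise is conditionally `R`-sub-Gaussian given `(A_1, …, A_t, Y_1, …, Y_{t−1})` -/
  noise_subG : ∀ t, 1 ≤ t → t ≤ T → ∀ u : ℝ,
    ∀ᵐ ω ∂P,
      MeasureTheory.condExp
        (MeasurableSpace.comap
          (fun ω' => (fun s : Fin t => act (s + 1) ω',
                      fun s : Fin (t - 1) => rew (s + 1) ω'))
          inferInstance)
        P (fun ω' => Real.exp (u * noise t ω')) ω ≤ Real.exp (u ^ 2 * R ^ 2 / 2)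
  /-- the regularized Gram matrix `V_t` -/
  Vmat : ℕ → Ω → Matrix (Fin d) (Fin d) ℝ
  hV0 : ∀ ω, Vmat 0 ω = lam • (1 : Matrix (Fin d) (Fin d) ℝ)
  hVs : ∀ t ω, Vmat (t + 1) ω =
    Vmat t ω + Matrix.vecMulVec (ctx (t + 1) (act (t + 1) ω)) (ctx (t + 1) (act (t + 1) ω))
  /-- the vector `W_t` -/
  Wvec : ℕ → Ω → Fin d → ℝ
  hW0 : ∀ ω, Wvec 0 ω = 0
  hWs : ∀ t ω, Wvec (t + 1) ω = Wvec t ω + rew (t + 1) ω • ctx (t + 1) (act (t + 1) ω)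
  /-- the ridge estimate `θ̂_t = V_t⁻¹ W_t` -/
  that : ℕ → Ω → Fin d → ℝ
  hthat : ∀ t ω, that t ω = (Vmat t ω)⁻¹.mulVec (Wvec t ω)
  /-- the distinguished arm of round `t` (the arm maximizing the empirical mean μ̂_{t,·}, with an
  arbitrary tie-breaking rule) -/
  emp : ℕ → Ω → Arm
  emp_mem : ∀ t, 1 ≤ t → t ≤ T → ∀ ω, emp t ω ∈ arms t
  emp_max : ∀ t, 1 ≤ t → t ≤ T → ∀ ω, ∀ a ∈ arms t,
    that (t - 1) ω ⬝ᵥ ctx t a ≤ that (t - 1) ω ⬝ᵥ ctx t (emp t ω)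
  /-- the LinIMED-2 index of each arm -/
  idx : ℕ → Arm → Ω → ℝ
  hidx_emp : ∀ t, 1 ≤ t → t ≤ T → ∀ ω,
    idx t (emp t ω) ω =
      min (Real.log T)
        (- Real.log (betaConf d L S R lam (t - 1) (1 / (t : ℝ) ^ 2) * (ctx t (emp t ω) ⬝ᵥ (Vmat (t - 1) ω)⁻¹.mulVec (ctx t (emp t ω)))))
  hidx : ∀ t, 1 ≤ t → t ≤ T → ∀ ω, ∀ a ∈ arms t, a ≠ emp t ω →
    idx t a ω =
      ((arms t).sup' (arms_ne t) (fun j => that (t - 1) ω ⬝ᵥ ctx t j) - that (t - 1) ω ⬝ᵥ ctx t a) ^ 2 /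
          (betaConf d L S R lam (t - 1) (1 / (t : ℝ) ^ 2) * (ctx t a ⬝ᵥ (Vmat (t - 1) ω)⁻¹.mulVec (ctx t a))) -
        Real.log (betaConf d L S R lam (t - 1) (1 / (t : ℝ) ^ 2) * (ctx t a ⬝ᵥ (Vmat (t - 1) ω)⁻¹.mulVec (ctx t a)))
  /-- the algorithm plays an arm minimizing the index (ties broken arbitrarily) -/
  act_min : ∀ t, 1 ≤ t → t ≤ T → ∀ ω, ∀ a ∈ arms t, idx t (act t ω) ω ≤ idx t a ω

namespace LinIMED2

variable {d T : ℕ} {L S R lam : ℝ} (E : LinIMED2 d T L S R lam)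

/-- The largest expected reward at round `t`, `⟨θ*, x*_t⟩`. -/
def maxTrue (t : ℕ) : ℝ :=
  (E.arms t).sup' (E.arms_ne t) (fun a => E.θstar ⬝ᵥ E.ctx t a)

/-- The instantaneous regret `Δ_t = ⟨θ*, x*_t⟩ − ⟨θ*, X_t⟩`. -/
def gap (t : ℕ) (ω : E.Ω) : ℝ :=
  E.maxTrue t - E.θstar ⬝ᵥ E.ctx t (E.act t ω)

/-- The expected cumulative regret `R_T`. -/
def regret : ℝ := ∫ ω, (∑ t ∈ Finset.Icc 1 T, E.gap t ω) ∂E.P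

end LinIMED2

namespace LinIMED2

variable {d T : ℕ} {L S R lam : ℝ} (E : LinIMED2 d T L S R lam)

/-- The confidence event `B_t`. -/
def Bev (t : ℕ) : Set E.Ω :=
  {ω | mnorm (E.Vmat (t - 1) ω) (E.that (t - 1) ω - E.θstar) ≤
    Real.sqrt (betaConf d L S R lam (t - 1) (1 / (t : ℝ) ^ 2))}

/-- The event `C_t = {max_b ⟨θ̂_{t−1}, x_{t,b}⟩ > ⟨θ*, x*_t⟩ − δ_t}` with
`δ_t = Δ_t/√(log T)`. -/
def Cev (t : ℕ) : Set E.Ω :=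
  {ω | E.maxTrue t - E.gap t ω / Real.sqrt (Real.log T) <
    (E.arms t).sup' (E.arms_ne t) (fun b => E.that (t - 1) ω ⬝ᵥ E.ctx t b)}

/-- The event `D_t = {Δ̂_{t,A_t} ≥ ε_t}` with `ε_t = (1 − 2/√(log T))·Δ_t`. -/
def Dev (t : ℕ) : Set E.Ω :=
  {ω | (1 - 2 / Real.sqrt (Real.log T)) * E.gap t ω ≤
    (E.arms t).sup' (E.arms_ne t) (fun j => E.that (t - 1) ω ⬝ᵥ E.ctx t j) -
      E.that (t - 1) ω ⬝ᵥ E.ctx t (E.act t ω)}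

/-- `F₁ = E[Σ_t Δ_t·1{B_t ∩ C_t ∩ D_t}]`. -/
def F1 : ℝ :=
  ∫ ω, (∑ t ∈ Finset.Icc 1 T,
    E.gap t ω * Set.indicator (E.Bev t ∩ E.Cev t ∩ E.Dev t) (fun _ => (1 : ℝ)) ω) ∂E.P

/-- `F₂ = E[Σ_t Δ_t·1{B_t ∩ C_t ∩ D_tᶜ}]`. -/
def F2 : ℝ :=
  ∫ ω, (∑ t ∈ Finset.Icc 1 T,
    E.gap t ω * Set.indicator (E.Bev t ∩ E.Cev t ∩ (E.Dev t)ᶜ) (fun _ => (1 : ℝ)) ω) ∂E.P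

/-- `F₃ = E[Σ_t Δ_t·1{B_t ∩ C_tᶜ}]`. -/
def F3 : ℝ :=
  ∫ ω, (∑ t ∈ Finset.Icc 1 T,
    E.gap t ω * Set.indicator (E.Bev t ∩ (E.Cev t)ᶜ) (fun _ => (1 : ℝ)) ω) ∂E.P

/-- `F₄ = E[Σ_t Δ_t·1{B_tᶜ}]`. -/
def F4 : ℝ :=
  ∫ ω, (∑ t ∈ Finset.Icc 1 T,
    E.gap t ω * Set.indicator ((E.Bev t)ᶜ) (fun _ => (1 : ℝ)) ω) ∂E.P

end LinIMED2

/-- `β_T = (R·√(d·log(T²·(1 + T·L²/λ))) + √λ·S)²`. -/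
def betaT (d T : ℕ) (L S R lam : ℝ) : ℝ :=
  (R * Real.sqrt (d * Real.log ((T : ℝ) ^ 2 * (1 + (T : ℝ) * L ^ 2 / lam))) +
    Real.sqrt lam * S) ^ 2

/-! On `B_t ∩ C_t ∩ D_tᶜ` the estimate `θ̂_{t-1}` overestimates the played arm by at least
`Δ_t / √(log T)`, so Cauchy–Schwarz in the `V_{t-1}`-norm gives
`Δ_t² < β_T log T ‖X_t‖²_{V_{t-1}⁻¹}`. Rounds with `Δ_t ≤ Γ` contribute at most `TΓ`. On the `n`
remaining rounds, `V_{t-1}` dominates the regularised Gram matrix `G_t` of the earlier such rounds,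
so `Δ_t ≤ (β_T log T / Γ) min(1, ‖X_t‖²_{G_t⁻¹})`, and the elliptical potential lemma (with
`det ≤ (trace / d)^d`) bounds their sum by `(β_T log T / Γ) · 2d log(1 + nL²/(dλ))`. Since also
`Γ² / (β_T log T) ≤ min(1, ‖X_t‖²_{G_t⁻¹})` on each of them, `n` obeys a self-bounding inequality
which turns `log(1 + nL²/(dλ))` into `8 log(1 + L² β_T log T / (λΓ²))`. The bound is pathwise,
so it passes to the expectation, with `c = 16` and `T₀ = 3`.
-/

lemma Real.prod_le_sum_div_card_pow {ι : Type*} (s : Finset ι) (z : ι → ℝ)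
    (hz : ∀ i ∈ s, 0 ≤ z i) : ∏ i ∈ s, z i ≤ ((∑ i ∈ s, z i) / #s) ^ #s := by
  rcases s.eq_empty_or_nonempty with rfl | hs
  · simp
  have h := Real.geom_mean_le_arith_mean s (fun _ => 1) z (by simp) (by simpa using hs) hz
  simp only [Real.rpow_one, one_mul, sum_const, nsmul_eq_mul, mul_one] at h
  calc ∏ i ∈ s, z i = ((∏ i ∈ s, z i) ^ (#s : ℝ)⁻¹) ^ #s :=
        (Real.rpow_inv_natCast_pow (prod_nonneg hz) hs.card_pos.ne').symm
    _ ≤ _ := pow_le_pow_left₀ (Real.rpow_nonneg (prod_nonneg hz) _) h _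

lemma Real.min_one_le_two_mul_log_one_add {u : ℝ} (hu : 0 ≤ u) :
    min 1 u ≤ 2 * Real.log (1 + u) := by
  have hlog := Real.one_sub_inv_le_log_of_pos (by linarith : 0 < 1 + u)
  have hfrac : 1 - (1 + u)⁻¹ = u / (1 + u) := by field_simp; ring
  rw [hfrac, div_le_iff₀ (by linarith)] at hlog
  rcases le_total 1 u with h | h
  · rw [min_eq_left h]; nlinarith
  · rw [min_eq_right h]; nlinarith

lemma Real.log_one_add_le_of_le_mul_log {y z : ℝ} (hy : 0 ≤ y) (hz : 0 ≤ z)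
    (h : y ≤ 2 * z * Real.log (1 + y)) : Real.log (1 + y) ≤ 8 * Real.log (1 + z) := by
  set s := √(1 + y) with hs
  have hs1 : 1 ≤ s := Real.one_le_sqrt.mpr (by linarith)
  have hss : s ^ 2 = 1 + y := Real.sq_sqrt (by linarith)
  have hlog : Real.log (1 + y) = 2 * Real.log s := by
    rw [hs, Real.log_sqrt (by linarith)]; ring
  have hlogs : Real.log s ≤ s - 1 := Real.log_le_sub_one_of_pos (by linarith)
  -- `h` now gives `s² - 1 ≤ 4z(s - 1)`
  have hs_le : s ≤ 1 + 4 * z := by nlinarith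
  have hpow : 1 + 4 * z ≤ (1 + z) ^ 4 := one_add_mul_le_pow (by linarith) 4
  calc Real.log (1 + y) = 2 * Real.log s := hlog
    _ ≤ 2 * Real.log ((1 + z) ^ 4) := by
        gcongr; linarith
    _ = 8 * Real.log (1 + z) := by rw [Real.log_pow]; push_cast; ring

lemma Real.log_one_add_le_of_mul_div_le {n d lam L K Γ : ℝ} (hn : 0 ≤ n) (hd : 0 < d)
    (hlam : 0 < lam) (hK : 0 < K) (hΓ : 0 < Γ)
    (h : n * (Γ ^ 2 / K) ≤ 2 * d * Real.log (1 + n * L ^ 2 / (d * lam))) :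
    Real.log (1 + n * L ^ 2 / (d * lam)) ≤ 8 * Real.log (1 + L ^ 2 * K / (lam * Γ ^ 2)) := by
  refine Real.log_one_add_le_of_le_mul_log (by positivity) (by positivity) ?_
  calc n * L ^ 2 / (d * lam) = n * (Γ ^ 2 / K) * (L ^ 2 * K / (lam * Γ ^ 2)) / d := by
        field_simp
    _ ≤ 2 * d * Real.log (1 + n * L ^ 2 / (d * lam)) * (L ^ 2 * K / (lam * Γ ^ 2)) / d := by
        gcongr
    _ = 2 * (L ^ 2 * K / (lam * Γ ^ 2)) * Real.log (1 + n * L ^ 2 / (d * lam)) := by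
        field_simp

lemma Real.div_le_min_one_of_sq_lt {a Γ K u : ℝ} (hΓ : 0 < Γ) (hΓa : Γ < a) (ha : a ≤ 1)
    (hK : 1 ≤ K) (h : a ^ 2 < K * u) : Γ ^ 2 / K ≤ min 1 u := by
  have hΓa2 : Γ ^ 2 < a ^ 2 := by gcongr
  refine le_min ?_ ?_
  · rw [div_le_one (by linarith)]; nlinarith
  · rw [div_le_iff₀ (by linarith)]; nlinarith

lemma Real.le_div_mul_min_one_of_sq_lt {a Γ K u : ℝ} (hΓ : 0 < Γ) (hΓa : Γ < a) (ha : a ≤ 1)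
    (hK : 1 ≤ K) (h : a ^ 2 < K * u) : a ≤ K / Γ * min 1 u := by
  rw [div_mul_eq_mul_div, le_div_iff₀ hΓ]
  rcases le_total 1 u with hu | hu
  · rw [min_eq_left hu]; nlinarith
  · rw [min_eq_right hu]; nlinarith

namespace Matrix

variable {m : Type*} [Fintype m]

lemma PosSemidef.dotProduct_mulVec_sq_le {A : Matrix m m ℝ} (hA : A.PosSemidef) (u v : m → ℝ) :
    (u ⬝ᵥ A *ᵥ v) ^ 2 ≤ (u ⬝ᵥ A *ᵥ u) * (v ⬝ᵥ A *ᵥ v) := by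
  let := A.toSeminormedAddCommGroup hA
  let := A.toInnerProductSpace hA
  have hinner : ∀ x y : m → ℝ, (inner ℝ x y : ℝ) = x ⬝ᵥ A *ᵥ y := fun x y => by
    change (A *ᵥ y) ⬝ᵥ star x = _
    rw [dotProduct_comm]; rfl
  have h := real_inner_mul_inner_self_le u v
  simp only [hinner] at h
  nlinarith [abs_mul_abs_self (u ⬝ᵥ A *ᵥ v)]

variable [DecidableEq m]

lemma mulVec_nonsing_inv_mulVec {α : Type*} [CommRing α] {A : Matrix m m α} (hA : IsUnit A.det)
    (x : m → α) : A *ᵥ (A⁻¹ *ᵥ x) = x := by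
  rw [mulVec_mulVec, mul_nonsing_inv _ hA, one_mulVec]

lemma PosDef.dotProduct_sq_le {V : Matrix m m ℝ} (hV : V.PosDef) (u x : m → ℝ) :
    (u ⬝ᵥ x) ^ 2 ≤ (u ⬝ᵥ V *ᵥ u) * (x ⬝ᵥ V⁻¹ *ᵥ x) := by
  have h := hV.posSemidef.dotProduct_mulVec_sq_le u (V⁻¹ *ᵥ x)
  rwa [mulVec_nonsing_inv_mulVec hV.det_pos.ne'.isUnit, dotProduct_comm (V⁻¹ *ᵥ x)] at h

lemma PosDef.dotProduct_inv_mulVec_antitone {A B : Matrix m m ℝ} (hA : A.PosDef) (hB : B.PosDef)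
    (hAB : (B - A).PosSemidef) (x : m → ℝ) :
    x ⬝ᵥ B⁻¹ *ᵥ x ≤ x ⬝ᵥ A⁻¹ *ᵥ x := by
  set y := B⁻¹ *ᵥ x
  have hyB : y ⬝ᵥ B *ᵥ y = x ⬝ᵥ y := by
    rw [mulVec_nonsing_inv_mulVec hB.det_pos.ne'.isUnit, dotProduct_comm]
  have hyA : y ⬝ᵥ A *ᵥ y ≤ y ⬝ᵥ B *ᵥ y := by
    have h := hAB.dotProduct_mulVec_nonneg y
    rw [star_trivial, sub_mulVec, dotProduct_sub] at h
    linarith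
  have hcs := hA.dotProduct_sq_le y x
  have hq : 0 ≤ x ⬝ᵥ A⁻¹ *ᵥ x := by simpa using hA.inv.posSemidef.dotProduct_mulVec_nonneg x
  have hs : 0 ≤ x ⬝ᵥ y := by simpa using hB.inv.posSemidef.dotProduct_mulVec_nonneg x
  rw [dotProduct_comm y x] at hcs
  nlinarith

lemma det_add_vecMulVec {α : Type*} [CommRing α] {A : Matrix m m α} (hA : IsUnit A.det)
    (u v : m → α) :
    (A + vecMulVec u v).det = A.det * (1 + v ⬝ᵥ A⁻¹ *ᵥ u) := by
  rw [vecMulVec_eq Unit, det_add_replicateCol_mul_replicateRow hA]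
  congr 1
  rw [det_unique, Matrix.mul_assoc, ← replicateCol_mulVec, add_apply, one_apply_eq,
    replicateRow_mul_replicateCol_apply]

lemma PosSemidef.det_le_trace_div_card_pow {A : Matrix m m ℝ} (hA : A.PosSemidef) :
    A.det ≤ (A.trace / Fintype.card m) ^ Fintype.card m := by
  rw [hA.isHermitian.det_eq_prod_eigenvalues, hA.isHermitian.trace_eq_sum_eigenvalues]
  simpa using Real.prod_le_sum_div_card_pow univ _ fun i _ => hA.eigenvalues_nonneg i

end Matrix

section EllipticalPotential

variable {m : Type*} [Fintype m] {x : ℕ → m → ℝ}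

lemma posSemidef_sum_vecMulVec (S : Finset ℕ) : (∑ s ∈ S, vecMulVec (x s) (x s)).PosSemidef :=
  Finset.sum_induction _ _ (fun _ _ ha hb => ha.add hb) PosSemidef.zero fun s _ => by
    simpa using posSemidef_vecMulVec_self_star (x s)

variable [DecidableEq m]

def gramOn (lam : ℝ) (x : ℕ → m → ℝ) (S : Finset ℕ) : Matrix m m ℝ :=
  lam • 1 + ∑ s ∈ S, vecMulVec (x s) (x s)

def gramPotential (lam : ℝ) (x : ℕ → m → ℝ) (S : Finset ℕ) (t : ℕ) : ℝ :=
  x t ⬝ᵥ (gramOn lam x (S.filter (· < t)))⁻¹ *ᵥ x t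

variable {lam : ℝ}

lemma posDef_gramOn (hlam : 0 < lam) (S : Finset ℕ) : (gramOn lam x S).PosDef := by
  refine PosDef.add_posSemidef ?_ (posSemidef_sum_vecMulVec S)
  rw [smul_one_eq_diagonal]
  exact PosDef.diagonal fun _ => hlam

lemma posSemidef_gramOn_sub_gramOn {S S' : Finset ℕ} (h : S ⊆ S') :
    (gramOn lam x S' - gramOn lam x S).PosSemidef := by
  rw [gramOn, gramOn, add_sub_add_left_eq_sub, ← sum_sdiff h, add_sub_cancel_right]
  exact posSemidef_sum_vecMulVec _

lemma gramPotential_nonneg (hlam : 0 < lam) (S : Finset ℕ) (t : ℕ) :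
    0 ≤ gramPotential lam x S t := by
  rw [gramPotential]
  simpa using (posDef_gramOn hlam _).inv.posSemidef.dotProduct_mulVec_nonneg (x t)

lemma det_gramOn_eq_prod (hlam : 0 < lam) (S : Finset ℕ) :
    (gramOn lam x S).det = lam ^ Fintype.card m * ∏ t ∈ S, (1 + gramPotential lam x S t) := by
  simp only [gramPotential]
  induction S using Finset.induction_on_max with
  | empty => simp [gramOn]
  | insert a S hlt ih =>
    have ha : a ∉ S := fun h => lt_irrefl a (hlt a h)
    have hpast : (insert a S).filter (· < a) = S := by
      ext s; simp only [mem_filter, mem_insert]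
      exact ⟨fun h => h.1.resolve_left (ne_of_lt h.2), fun h => ⟨Or.inr h, hlt s h⟩⟩
    have hfilter : ∀ t ∈ S, (insert a S).filter (· < t) = S.filter (· < t) := fun t ht => by
      rw [filter_insert, if_neg (not_lt.mpr (hlt t ht).le)]
    have hgram : gramOn lam x (insert a S) = gramOn lam x S + vecMulVec (x a) (x a) := by
      rw [gramOn, gramOn, sum_insert ha, add_comm (vecMulVec _ _), add_assoc]
    rw [hgram, det_add_vecMulVec (posDef_gramOn hlam S).det_pos.ne'.isUnit, ih,
      prod_insert ha, hpast, prod_congr rfl fun t ht => by rw [← hfilter t ht]]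
    ring

lemma trace_gramOn_le {L : ℝ} {S : Finset ℕ} (hx : ∀ s ∈ S, x s ⬝ᵥ x s ≤ L ^ 2) :
    (gramOn lam x S).trace ≤ Fintype.card m * lam + #S * L ^ 2 := by
  rw [gramOn, trace_add, trace_smul, trace_one, trace_sum, smul_eq_mul, mul_comm]
  simp only [trace_vecMulVec]
  gcongr
  simpa using sum_le_sum hx

theorem sum_min_one_gramPotential_le {L : ℝ} (hlam : 0 < lam) {S : Finset ℕ}
    (hx : ∀ s ∈ S, x s ⬝ᵥ x s ≤ L ^ 2) :
    ∑ t ∈ S, min 1 (gramPotential lam x S t) ≤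
      2 * Fintype.card m * Real.log (1 + #S * L ^ 2 / (Fintype.card m * lam)) := by
  set u := gramPotential lam x S
  have hu : ∀ t, 0 ≤ u t := gramPotential_nonneg hlam S
  set d : ℕ := Fintype.card m
  have hdet : ∏ t ∈ S, (1 + u t) ≤ (1 + #S * L ^ 2 / (d * lam)) ^ d := by
    have hG := posDef_gramOn (x := x) hlam S
    have hd : (0 : ℝ) ≤ d := d.cast_nonneg
    have htr : (gramOn lam x S).trace / d ≤ lam * (1 + #S * L ^ 2 / (d * lam)) := by
      rcases hd.eq_or_lt with hd0 | hdpos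
      · rw [← hd0, div_zero, zero_mul, div_zero]; linarith
      · rw [div_le_iff₀ hdpos]
        have := trace_gramOn_le (lam := lam) hx
        field_simp
        linarith
    have h := hG.posSemidef.det_le_trace_div_card_pow.trans
      (pow_le_pow_left₀ (div_nonneg hG.posSemidef.trace_nonneg hd) htr d)
    rw [det_gramOn_eq_prod hlam, mul_pow] at h
    exact le_of_mul_le_mul_left h (by positivity)
  calc ∑ t ∈ S, min 1 (u t) ≤ ∑ t ∈ S, 2 * Real.log (1 + u t) :=
        sum_le_sum fun t _ => Real.min_one_le_two_mul_log_one_add (hu t)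
    _ = 2 * Real.log (∏ t ∈ S, (1 + u t)) := by
        rw [← mul_sum, Real.log_prod fun t _ => by linarith [hu t]]
    _ ≤ 2 * Real.log ((1 + #S * L ^ 2 / (d * lam)) ^ d) := by
        gcongr
        exact prod_pos fun t _ => by linarith [hu t]
    _ = 2 * d * Real.log (1 + #S * L ^ 2 / (d * lam)) := by rw [Real.log_pow]; ring

end EllipticalPotential

lemma betaConf_le_betaT {d T t : ℕ} {L S R lam : ℝ} (hR : 0 ≤ R) (hlam : 0 < lam)
    (hS : 0 ≤ Real.sqrt lam * S) (ht1 : 1 ≤ t) (htT : t ≤ T) :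
    betaConf d L S R lam (t - 1) (1 / (t : ℝ) ^ 2) ≤ betaT d T L S R lam := by
  have htT' : (t : ℝ) ≤ T := by exact_mod_cast htT
  have hpred : ((t - 1 : ℕ) : ℝ) ≤ T := by exact_mod_cast (t.sub_le 1).trans htT
  have harg : (1 + ((t - 1 : ℕ) : ℝ) * L ^ 2 / lam) / (1 / (t : ℝ) ^ 2) ≤
      (T : ℝ) ^ 2 * (1 + T * L ^ 2 / lam) := by
    rw [one_div, div_inv_eq_mul, mul_comm]
    gcongr
  rw [betaConf, betaT]
  gcongr

lemma one_le_betaT {d T : ℕ} {L S R lam : ℝ} (hR : 0 ≤ R) (hS : 1 ≤ Real.sqrt lam * S) :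
    1 ≤ betaT d T L S R lam :=
  one_le_pow₀ (by rw [← zero_add 1]; exact add_le_add (by positivity) hS)

namespace LinIMED2

variable {d T : ℕ} {L S R lam : ℝ} (E : LinIMED2 d T L S R lam)

def X (ω : E.Ω) (t : ℕ) : Fin d → ℝ := E.ctx t (E.act t ω)

lemma Vmat_eq_gramOn (ω : E.Ω) (k : ℕ) : E.Vmat k ω = gramOn lam (E.X ω) (Icc 1 k) := by
  induction k with
  | zero => simp [gramOn, E.hV0]
  | succ k ih => rw [E.hVs, ih, gramOn, gramOn, sum_Icc_succ_top (by omega), add_assoc, X]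

lemma X_dotProduct_self_le {t : ℕ} (ht1 : 1 ≤ t) (htT : t ≤ T) (ω : E.Ω) :
    E.X ω t ⬝ᵥ E.X ω t ≤ L ^ 2 := by
  have h := E.ctx_bdd t ht1 htT _ (E.act_mem t ht1 htT ω)
  rwa [enorm2, Real.sqrt_le_left E.hL.le] at h

lemma gap_nonneg {t : ℕ} (ht1 : 1 ≤ t) (htT : t ≤ T) (ω : E.Ω) : 0 ≤ E.gap t ω :=
  sub_nonneg.mpr (le_sup' (fun a => E.θstar ⬝ᵥ E.ctx t a) (E.act_mem t ht1 htT ω))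

lemma gap_le_one {t : ℕ} (ht1 : 1 ≤ t) (htT : t ≤ T) (ω : E.Ω) : E.gap t ω ≤ 1 :=
  E.gap_bdd t ht1 htT _ (E.act_mem t ht1 htT ω)

lemma gap_sq_lt {t : ℕ} (ht1 : 1 ≤ t) (htT : t ≤ T) {ω : E.Ω}
    (hω : ω ∈ E.Bev t ∩ E.Cev t ∩ (E.Dev t)ᶜ) :
    E.gap t ω ^ 2 <
      betaT d T L S R lam * Real.log T * (E.X ω t ⬝ᵥ (E.Vmat (t - 1) ω)⁻¹ *ᵥ E.X ω t) := by
  obtain ⟨⟨hB, hC⟩, hD⟩ := hω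
  simp only [Bev, Cev, Dev, Set.mem_ofPred_eq, Set.mem_compl_iff, not_le] at hB hC hD
  have hlog : 0 < Real.log T := Real.log_pos (by exact_mod_cast E.hT)
  set s := √(Real.log T)
  have hs : 0 < s := Real.sqrt_pos.mpr hlog
  have hV : (E.Vmat (t - 1) ω).PosDef := by rw [E.Vmat_eq_gramOn]; exact posDef_gramOn E.hlam _
  set g := E.gap t ω
  set θd := E.that (t - 1) ω - E.θstar
  set V := E.Vmat (t - 1) ω
  have hg : 0 ≤ g := E.gap_nonneg ht1 htT ω
  -- `C_t` puts the empirical maximum within `g / s` of the true one, `D_tᶜ` puts `A_t` within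
  -- `(1 - 2 / s) g` of the empirical maximum: together `θ̂` overestimates `A_t` by `g / s`.
  have hover : g / s < θd ⬝ᵥ E.X ω t := by
    have hsplit : (1 - 2 / s) * g = g - 2 * (g / s) := by ring
    have hgap : g = E.maxTrue t - E.θstar ⬝ᵥ E.ctx t (E.act t ω) := rfl
    rw [sub_dotProduct, X]
    linarith
  have hconf : θd ⬝ᵥ V *ᵥ θd ≤ betaT d T L S R lam := by
    refine le_trans ?_ (betaConf_le_betaT E.hR.le E.hlam (by linarith [E.hlamS]) ht1 htT)
    rwa [mnorm, Real.sqrt_le_sqrt_iff (by rw [betaConf]; positivity)] at hB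
  have hcs := hV.dotProduct_sq_le θd (E.X ω t)
  have hw : 0 ≤ E.X ω t ⬝ᵥ V⁻¹ *ᵥ E.X ω t := by
    simpa using hV.inv.posSemidef.dotProduct_mulVec_nonneg (E.X ω t)
  have hgs : (g / s) ^ 2 < betaT d T L S R lam * (E.X ω t ⬝ᵥ V⁻¹ *ᵥ E.X ω t) :=
    calc (g / s) ^ 2 < (θd ⬝ᵥ E.X ω t) ^ 2 := by gcongr
      _ ≤ _ := hcs.trans (by gcongr)
  rwa [div_pow, Real.sq_sqrt hlog.le, div_lt_iff₀ hlog, mul_right_comm] at hgs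

def badRounds (Γ : ℝ) (ω : E.Ω) : Finset ℕ :=
  (Icc 1 T).filter fun t => ω ∈ E.Bev t ∩ E.Cev t ∩ (E.Dev t)ᶜ ∧ Γ < E.gap t ω

lemma sum_gap_indicator_le {Γ : ℝ} (hΓ : 0 ≤ Γ) (ω : E.Ω) :
    ∑ t ∈ Icc 1 T, E.gap t ω * (E.Bev t ∩ E.Cev t ∩ (E.Dev t)ᶜ).indicator (fun _ => (1 : ℝ)) ω ≤
      T * Γ + ∑ t ∈ E.badRounds Γ ω, E.gap t ω := by
  have hT : ∑ _t ∈ Icc 1 T, Γ = T * Γ := by simp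
  rw [badRounds, sum_filter, ← hT, ← sum_add_distrib]
  refine sum_le_sum fun t ht => ?_
  have hg := E.gap_nonneg (mem_Icc.mp ht).1 (mem_Icc.mp ht).2 ω
  by_cases hω : ω ∈ E.Bev t ∩ E.Cev t ∩ (E.Dev t)ᶜ
  · by_cases hΓg : Γ < E.gap t ω
    · simp [hω, hΓg, hΓ]
    · simp only [Set.indicator_of_mem hω, hω, hΓg, and_false, if_false]; linarith
  · simp [hω, hΓ]

lemma dotProduct_inv_Vmat_le (ω : E.Ω) {k : ℕ} {S : Finset ℕ} (hS : S ⊆ Icc 1 k) (v : Fin d → ℝ) :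
    v ⬝ᵥ (E.Vmat k ω)⁻¹ *ᵥ v ≤ v ⬝ᵥ (gramOn lam (E.X ω) S)⁻¹ *ᵥ v := by
  rw [E.Vmat_eq_gramOn]
  exact (posDef_gramOn E.hlam _).dotProduct_inv_mulVec_antitone (posDef_gramOn E.hlam _)
    (posSemidef_gramOn_sub_gramOn hS) v

lemma gap_bounds_of_mem_badRounds {Γ : ℝ} {ω : E.Ω} {t : ℕ} (ht : t ∈ E.badRounds Γ ω) :
    Γ < E.gap t ω ∧ E.gap t ω ≤ 1 ∧
      E.gap t ω ^ 2 <
        betaT d T L S R lam * Real.log T * gramPotential lam (E.X ω) (E.badRounds Γ ω) t := by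
  have hmem := ht
  simp only [badRounds, mem_filter, mem_Icc] at hmem
  obtain ⟨⟨ht1, htT⟩, hω, hΓ⟩ := hmem
  refine ⟨hΓ, E.gap_le_one ht1 htT ω, (E.gap_sq_lt ht1 htT hω).trans_le ?_⟩
  have hβ : 0 ≤ betaT d T L S R lam * Real.log T :=
    mul_nonneg (sq_nonneg _) (Real.log_nonneg (by exact_mod_cast E.hT.trans' one_le_two))
  refine mul_le_mul_of_nonneg_left (E.dotProduct_inv_Vmat_le ω (fun s hs => ?_) _) hβ
  simp only [badRounds, mem_filter, mem_Icc] at hs ⊢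
  omega

lemma sum_min_one_gramPotential_badRounds_le (Γ : ℝ) (ω : E.Ω) :
    ∑ t ∈ E.badRounds Γ ω, min 1 (gramPotential lam (E.X ω) (E.badRounds Γ ω) t) ≤
      2 * d * Real.log (1 + #(E.badRounds Γ ω) * L ^ 2 / (d * lam)) := by
  have hx : ∀ t ∈ E.badRounds Γ ω, E.X ω t ⬝ᵥ E.X ω t ≤ L ^ 2 := fun t ht => by
    simp only [badRounds, mem_filter, mem_Icc] at ht
    exact E.X_dotProduct_self_le ht.1.1 ht.1.2 ω
  simpa using sum_min_one_gramPotential_le E.hlam hx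

theorem sum_gap_badRounds_le (hT : 3 ≤ T) {Γ : ℝ} (hΓ0 : 0 < Γ) (hΓ1 : Γ < 1) (ω : E.Ω) :
    ∑ t ∈ E.badRounds Γ ω, E.gap t ω ≤
      16 * (d * betaT d T L S R lam * Real.log T / Γ) *
        Real.log (1 + L ^ 2 * betaT d T L S R lam * Real.log T / (lam * Γ ^ 2)) := by
  have hlogT : 1 ≤ Real.log T := by
    rw [Real.le_log_iff_exp_le (by positivity)]
    have : (3 : ℝ) ≤ T := by exact_mod_cast hT
    linarith [Real.exp_one_lt_d9]
  set K := betaT d T L S R lam * Real.log T with hK_def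
  have hK : 1 ≤ K := one_le_mul_of_one_le_of_one_le (one_le_betaT E.hR.le E.hlamS) hlogT
  set bad := E.badRounds Γ ω
  set u := gramPotential lam (E.X ω) bad
  have hround := fun t (ht : t ∈ bad) => E.gap_bounds_of_mem_badRounds ht
  have hpot := E.sum_min_one_gramPotential_badRounds_le Γ ω
  have hcount : #bad * (Γ ^ 2 / K) ≤ 2 * d * Real.log (1 + #bad * L ^ 2 / (d * lam)) :=
    calc #bad * (Γ ^ 2 / K) = ∑ _t ∈ bad, Γ ^ 2 / K := by simp
      _ ≤ ∑ t ∈ bad, min 1 (u t) := sum_le_sum fun t ht =>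
          Real.div_le_min_one_of_sq_lt hΓ0 (hround t ht).1 (hround t ht).2.1 hK (hround t ht).2.2
      _ ≤ _ := hpot
  have hlog := Real.log_one_add_le_of_mul_div_le (Nat.cast_nonneg _) (by exact_mod_cast E.hd)
    E.hlam (by linarith) hΓ0 hcount
  have hK_assoc : L ^ 2 * K = L ^ 2 * betaT d T L S R lam * Real.log T := by
    rw [hK_def, mul_assoc]
  calc ∑ t ∈ bad, E.gap t ω ≤ ∑ t ∈ bad, K / Γ * min 1 (u t) := sum_le_sum fun t ht =>
        Real.le_div_mul_min_one_of_sq_lt hΓ0 (hround t ht).1 (hround t ht).2.1 hK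
          (hround t ht).2.2
    _ = K / Γ * ∑ t ∈ bad, min 1 (u t) := by rw [mul_sum]
    _ ≤ K / Γ * (2 * d * (8 * Real.log (1 + L ^ 2 * K / (lam * Γ ^ 2)))) := by
        gcongr
        exact hpot.trans (by gcongr)
    _ = _ := by rw [hK_assoc, hK_def]; ring

end LinIMED2

theorem linimed2_F2_bound_general (L S R lam : ℝ) :
    ∃ c : ℝ, 0 < c ∧ ∃ T₀ : ℕ, 2 ≤ T₀ ∧
      ∀ (d T : ℕ) (E : LinIMED2 d T L S R lam), T₀ ≤ T →
        ∀ Γ : ℝ, 0 < Γ → Γ < 1 →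
          E.F2 ≤ (T : ℝ) * Γ +
            c * (d * betaT d T L S R lam * Real.log T / Γ) *
              Real.log (1 + L ^ 2 * betaT d T L S R lam * Real.log T / (lam * Γ ^ 2)) := by
  refine ⟨16, by norm_num, 3, by norm_num, fun d T E hT Γ hΓ0 hΓ1 => ?_⟩
  have := E.hP
  have hnonneg : ∀ ω, 0 ≤ ∑ t ∈ Icc 1 T,
      E.gap t ω * (E.Bev t ∩ E.Cev t ∩ (E.Dev t)ᶜ).indicator (fun _ => (1 : ℝ)) ω :=
    fun ω => sum_nonneg fun t ht => mul_nonneg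
      (E.gap_nonneg (mem_Icc.mp ht).1 (mem_Icc.mp ht).2 ω) (Set.indicator_nonneg (by simp) ω)
  have hbound := fun ω => (E.sum_gap_indicator_le hΓ0.le ω).trans
    (add_le_add_right (E.sum_gap_badRounds_le hT hΓ0 hΓ1 ω) _)
  refine (MeasureTheory.integral_mono_of_nonneg (.of_forall hnonneg)
    (MeasureTheory.integrable_const _) (.of_forall hbound)).trans ?_
  simp

/-- **Lemma 7: bound on `F₂` for LinIMED-2.** -/
theorem linimed2_F2_bound (L S R lam : ℝ) (hL : 0 < L) (hS : 0 < S) (hR : 0 < R)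
    (hlam : 0 < lam) :
    ∃ c : ℝ, 0 < c ∧ ∃ T₀ : ℕ, 2 ≤ T₀ ∧
      ∀ (d T : ℕ) (E : LinIMED2 d T L S R lam), T₀ ≤ T →
        ∀ Γ : ℝ, 0 < Γ → Γ < 1 →
          E.F2 ≤ (T : ℝ) * Γ +
            c * (d * betaT d T L S R lam * Real.log T / Γ) *
              Real.log (1 + L ^ 2 * betaT d T L S R lam * Real.log T / (lam * Γ ^ 2)) :=
  linimed2_F2_bound_general L S R lam
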